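/- If ∃ is a quantifier on a Boolean algebra A and B is its image, then B is a relatively complete Boolean subalgebra of A: for every p ∈ A, the set B(p) = {q ∈ B : p ≤ q} has a least element, namely ∃p. Conversely, a relatively complete Boolean subalgebra B of A determines a unique quantifier on A with image B, given by ∃p = least element of B(p). -/
import Mathlib


/-- An existential quantifier on a Boolean algebra: normalized, increasing,
and quasi-multiplicative. -/
structure IsQuantifier {A : Type*} [BooleanAlgebra A] (E : A → A) : Prop where
  norm : E ⊥ = ⊥
  incr : ∀ p, p ≤ E p
  quasi_mul : ∀ p q, E (p ⊓ E q) = E p ⊓ E q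

/-- A subset of a Boolean algebra that is a Boolean subalgebra. -/
structure IsBooleanSubalgebra {A : Type*} [BooleanAlgebra A] (B : Set A) : Prop where
  bot_mem : ⊥ ∈ B
  top_mem : ⊤ ∈ B
  inf_mem : ∀ p q, p ∈ B → q ∈ B → p ⊓ q ∈ B
  sup_mem : ∀ p q, p ∈ B → q ∈ B → p ⊔ q ∈ B
  compl_mem : ∀ p, p ∈ B → pᶜ ∈ B

/-- `B` is relatively complete: for every `p`, `{q ∈ B : p ≤ q}` has a least element. -/
def RelativelyComplete {A : Type*} [BooleanAlgebra A] (B : Set A) : Prop :=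
  ∀ p : A, ∃ q₀, IsLeast {q ∈ B | p ≤ q} q₀

theorem quantifier_image_relatively_complete {A : Type*} [BooleanAlgebra A] :
    (∀ E : A → A, IsQuantifier E →
      IsBooleanSubalgebra (Set.range E) ∧
      ∀ p : A, IsLeast {q ∈ Set.range E | p ≤ q} (E p)) ∧
    (∀ B : Set A, IsBooleanSubalgebra B → RelativelyComplete B →
      ∃! E : A → A, IsQuantifier E ∧ Set.range E = B ∧
        ∀ p : A, IsLeast {q ∈ B | p ≤ q} (E p)) := by
  constructor
  · intro E hE
    have idem : ∀ q, E (E q) = E q := by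
      intro q
      have h := hE.quasi_mul (E q) q
      rw [inf_idem] at h
      exact le_antisymm (h.le.trans inf_le_right) (hE.incr _)
    have mono : ∀ p q, p ≤ q → E p ≤ E q := by
      intro p q h
      have h1 : p ⊓ E q = p := inf_eq_left.2 (h.trans (hE.incr q))
      have h2 := hE.quasi_mul p q
      rw [h1] at h2
      exact h2.le.trans inf_le_right
    have hc : ∀ q, E (E q)ᶜ = (E q)ᶜ := by
      intro q
      have h := hE.quasi_mul (E q)ᶜ q
      rw [compl_inf_self, hE.norm] at h
      refine le_antisymm ?_ (hE.incr _)
      exact le_compl_iff_disjoint_right.2 (disjoint_iff.2 h.symm)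
    have hinf : ∀ p q : A, p ∈ Set.range E → q ∈ Set.range E → p ⊓ q ∈ Set.range E := by
      rintro _ _ ⟨x, rfl⟩ ⟨y, rfl⟩
      refine ⟨E x ⊓ E y, ?_⟩
      rw [hE.quasi_mul, idem]
    have hcompl : ∀ p : A, p ∈ Set.range E → pᶜ ∈ Set.range E := by
      rintro _ ⟨x, rfl⟩
      exact ⟨(E x)ᶜ, hc x⟩
    refine ⟨⟨⟨⊥, hE.norm⟩, ⟨⊤, le_antisymm le_top (hE.incr ⊤)⟩, hinf, ?_, hcompl⟩, ?_⟩
    · intro p q hp hq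
      have h := hcompl _ (hinf _ _ (hcompl p hp) (hcompl q hq))
      rwa [compl_inf, compl_compl, compl_compl] at h
    · intro p
      refine ⟨⟨⟨p, rfl⟩, hE.incr p⟩, ?_⟩
      rintro q ⟨⟨x, rfl⟩, hpq⟩
      have := mono p (E x) hpq
      rwa [idem] at this
  · intro B hB hRC
    choose E hE using hRC
    have hmemB : ∀ p, E p ∈ B := fun p => (hE p).1.1
    have hle : ∀ p, p ≤ E p := fun p => (hE p).1.2
    have hmin : ∀ p q, q ∈ B → p ≤ q → E p ≤ q := fun p q hq hpq => (hE p).2 ⟨hq, hpq⟩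
    have hfix : ∀ b ∈ B, E b = b := fun b hb => le_antisymm (hmin b b hb le_rfl) (hle b)
    have hq : IsQuantifier E := by
      refine ⟨hfix ⊥ hB.bot_mem, hle, ?_⟩
      intro p q
      apply le_antisymm
      · exact hmin _ _ (hB.inf_mem _ _ (hmemB p) (hmemB q)) (inf_le_inf (hle p) le_rfl)
      · have h1 : p ≤ E (p ⊓ E q) ⊔ (E q)ᶜ := by
          rw [sup_comm, ← sdiff_le_iff, sdiff_compl]
          exact hle _
        have h2 : E p ≤ E (p ⊓ E q) ⊔ (E q)ᶜ :=
          hmin _ _ (hB.sup_mem _ _ (hmemB _) (hB.compl_mem _ (hmemB q))) h1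
        calc E p ⊓ E q ≤ (E (p ⊓ E q) ⊔ (E q)ᶜ) ⊓ E q := inf_le_inf h2 le_rfl
          _ = E (p ⊓ E q) ⊓ E q := by rw [inf_sup_right, compl_inf_self, sup_bot_eq]
          _ ≤ E (p ⊓ E q) := inf_le_left
    refine ⟨E, ⟨hq, ?_, hE⟩, ?_⟩
    · ext x
      exact ⟨fun ⟨y, hy⟩ => hy ▸ hmemB y, fun hx => ⟨x, hfix x hx⟩⟩
    · rintro E' ⟨-, -, hE'⟩
      funext p
      exact (hE' p).unique (hE p)
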